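/- Consider generalized interpolation data Δ = {(x_i, y_j, z_{i,j}, t_{i,j})} and Δ* = {(x_i, y_j, z_{i,j}, t*_{i,j})} with N = M, x₀ = y₀ = 0, x_N = y_N = 1/2, the same z-values, and the same parameters α_{n,m}, β_{n,m}, γ_{n,m}. Let (F₁, F₂) and (G₁, G₂) be the corresponding CHFIS pairs. Then for every 1 ≤ n, m ≤ N and every (x,y) ∈ [0,1/2] × [0,1/2]: |F₁(φ_n(x),ψ_m(y)) − G₁(φ_n(x),ψ_m(y))| ≤ α · |F₁(x,y) − G₁(x,y)| + β · |F₂(x,y) − G₂(x,y)| + β · (2|x − 1/2| + 2|y − 1/2| + 4|xy − 1/4| + 1) · max{ |t_{n,m} − t*_{n,m}| : 0 ≤ n, m ≤ N }, where α = max_{n,m}|α_{n,m}| and β = max_{n,m}|β_{n,m}|. -/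
import Mathlib


open Real Set

noncomputable section

/-- `z_eva` (resp. `t_eva`) from the paper: `z N M - z N 0 - z 0 M + z 0 0`. -/
def eva (N M : ℕ) (z : ℕ → ℕ → ℝ) : ℝ := z N M - z N 0 - z 0 M + z 0 0

/-- The coefficient `g_{n,m}` determined by the join-up conditions. -/
def gCoef (N M : ℕ) (x y : ℕ → ℝ) (z t : ℕ → ℕ → ℝ) (a b : ℕ → ℕ → ℝ) (n m : ℕ) : ℝ :=
  (z (n-1) (m-1) - z (n-1) m - z n (m-1) + z n m
    - a n m * eva N M z - b n m * eva N M t) / ((x 0 - x N) * (y 0 - y M))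

/-- The coefficient `e_{n,m}`. -/
def eCoef (N M : ℕ) (x y : ℕ → ℝ) (z t : ℕ → ℕ → ℝ) (a b : ℕ → ℕ → ℝ) (n m : ℕ) : ℝ :=
  (z (n-1) (m-1) - z n (m-1) - a n m * (z 0 0 - z N 0) - b n m * (t 0 0 - t N 0)
    - gCoef N M x y z t a b n m * (x 0 - x N) * y 0) / (x 0 - x N)

/-- The coefficient `f_{n,m}`. -/
def fCoef (N M : ℕ) (x y : ℕ → ℝ) (z t : ℕ → ℕ → ℝ) (a b : ℕ → ℕ → ℝ) (n m : ℕ) : ℝ :=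
  (z (n-1) (m-1) - z (n-1) m - a n m * (z 0 0 - z 0 M) - b n m * (t 0 0 - t 0 M)
    - gCoef N M x y z t a b n m * (y 0 - y M) * x 0) / (y 0 - y M)

/-- The coefficient `k_{n,m}`. -/
def kCoef (N M : ℕ) (x y : ℕ → ℝ) (z t : ℕ → ℕ → ℝ) (a b : ℕ → ℕ → ℝ) (n m : ℕ) : ℝ :=
  z n m - eCoef N M x y z t a b n m * x N - fCoef N M x y z t a b n m * y M
    - a n m * z N M - b n m * t N M - gCoef N M x y z t a b n m * x N * y M

/-- `p_{n,m}(X,Y) = e_{n,m} X + f_{n,m} Y + g_{n,m} X Y + k_{n,m}`. -/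
def pMap (N M : ℕ) (x y : ℕ → ℝ) (z t : ℕ → ℕ → ℝ) (a b : ℕ → ℕ → ℝ) (n m : ℕ)
    (X Y : ℝ) : ℝ :=
  eCoef N M x y z t a b n m * X + fCoef N M x y z t a b n m * Y
    + gCoef N M x y z t a b n m * X * Y + kCoef N M x y z t a b n m

/-- `q_{n,m}(X,Y) = ẽ_{n,m} X + f̃_{n,m} Y + g̃_{n,m} X Y + k̃_{n,m}`; it is `p` built from the
data `t` with parameters `γ` and `0`. -/
def qMap (N M : ℕ) (x y : ℕ → ℝ) (t : ℕ → ℕ → ℝ) (c : ℕ → ℕ → ℝ) (n m : ℕ) (X Y : ℝ) : ℝ :=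
  pMap N M x y t t c (fun _ _ => 0) n m X Y

/-- `φ_n` (resp. `ψ_m`): the affine map of `[x₀, x_N]` onto `[x_{n-1}, x_n]`. -/
def phiMap (N : ℕ) (x : ℕ → ℝ) (n : ℕ) (X : ℝ) : ℝ :=
  x (n-1) + (x n - x (n-1)) * (X - x 0) / (x N - x 0)

/-- Validity of generalized interpolation data: `N, M ≥ 1`, strictly increasing knots,
`|α_{n,m}| < 1` and `|β_{n,m}| + |γ_{n,m}| < 1`. -/
structure DataOK (N M : ℕ) (x y : ℕ → ℝ) (a b c : ℕ → ℕ → ℝ) : Prop where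
  hN : 1 ≤ N
  hM : 1 ≤ M
  hx : ∀ i < N, x i < x (i+1)
  hy : ∀ j < M, y j < y (j+1)
  ha : ∀ n m, 1 ≤ n → n ≤ N → 1 ≤ m → m ≤ M → |a n m| < 1
  hbc : ∀ n m, 1 ≤ n → n ≤ N → 1 ≤ m → m ≤ M → |b n m| + |c n m| < 1

/-- `(F₁, F₂)` is the CHFIS pair for the generalized interpolation data. -/
def IsCHFIS (N M : ℕ) (x y : ℕ → ℝ) (z t : ℕ → ℕ → ℝ) (a b c : ℕ → ℕ → ℝ)
    (F₁ F₂ : ℝ → ℝ → ℝ) : Prop :=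
  ContinuousOn (fun P : ℝ × ℝ => F₁ P.1 P.2) (Icc (x 0) (x N) ×ˢ Icc (y 0) (y M)) ∧
  ContinuousOn (fun P : ℝ × ℝ => F₂ P.1 P.2) (Icc (x 0) (x N) ×ˢ Icc (y 0) (y M)) ∧
  (∀ i ≤ N, ∀ j ≤ M, F₁ (x i) (y j) = z i j ∧ F₂ (x i) (y j) = t i j) ∧
  ∀ n m, 1 ≤ n → n ≤ N → 1 ≤ m → m ≤ M →
    ∀ X ∈ Icc (x 0) (x N), ∀ Y ∈ Icc (y 0) (y M),
      F₁ (phiMap N x n X) (phiMap M y m Y)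
        = a n m * F₁ X Y + b n m * F₂ X Y + pMap N M x y z t a b n m X Y ∧
      F₂ (phiMap N x n X) (phiMap M y m Y)
        = c n m * F₂ X Y + qMap N M x y t c n m X Y

/-- The invariance-of-ratio condition between the knots `x, y` and the knots `xs, ys`. -/
def RatioInv (N M : ℕ) (x y xs ys : ℕ → ℝ) : Prop :=
  (∀ n, 1 ≤ n → n ≤ N → (x 0 - x N) / (xs 0 - xs N) = (x (n-1) - x n) / (xs (n-1) - xs n)) ∧
  (∀ m, 1 ≤ m → m ≤ M → (y 0 - y M) / (ys 0 - ys M) = (y (m-1) - y m) / (ys (m-1) - ys m))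

/-- `T : [x₀, x_N] → [xs₀, xs_N]` is the cell-wise affine transfer map, sending
`[x_{n-1}, x_n]` affinely onto `[xs_{n-1}, xs_n]` (one coordinate of `R` resp. `K`). -/
def IsTransfer (N : ℕ) (x xs : ℕ → ℝ) (T : ℝ → ℝ) : Prop :=
  ∀ n, 1 ≤ n → n ≤ N → ∀ X ∈ Icc (x (n-1)) (x n),
    T X = xs (n-1) + (xs n - xs (n-1)) * (X - x (n-1)) / (x n - x (n-1))

/-- `max { |a n m| : 1 ≤ n ≤ N, 1 ≤ m ≤ M }` (as an `sSup`). -/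
def supParam (N M : ℕ) (a : ℕ → ℕ → ℝ) : ℝ :=
  sSup {v : ℝ | ∃ n m, 1 ≤ n ∧ n ≤ N ∧ 1 ≤ m ∧ m ≤ M ∧ v = |a n m|}

/-- `max { (|x_n - xs_n| + |y_m - ys_m|)^δ : 0 ≤ n ≤ N, 0 ≤ m ≤ M }` (as an `sSup`). -/
def supKnotDiff (N M : ℕ) (x xs y ys : ℕ → ℝ) (d : ℝ) : ℝ :=
  sSup {v : ℝ | ∃ n m, n ≤ N ∧ m ≤ M ∧ v = (|x n - xs n| + |y m - ys m|) ^ d}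

/-- `max { |z_{n,m} - zs_{n,m}| : 0 ≤ n ≤ N, 0 ≤ m ≤ M }` (as an `sSup`). -/
def supValDiff (N M : ℕ) (z zs : ℕ → ℕ → ℝ) : ℝ :=
  sSup {v : ℝ | ∃ n m, n ≤ N ∧ m ≤ M ∧ v = |z n m - zs n m|}

/-- `max { |z_{i,j} - z_{k,l}| : 0 ≤ i,j,k,l ≤ N }` (as an `sSup`). -/
def supPairDiff (N : ℕ) (z : ℕ → ℕ → ℝ) : ℝ :=
  sSup {v : ℝ | ∃ i j k l, i ≤ N ∧ j ≤ N ∧ k ≤ N ∧ l ≤ N ∧ v = |z i j - z k l|}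

set_option maxHeartbeats 2000000 in
/-- for a perturbation of the hidden variable `t` only (on
`[0,1/2] × [0,1/2]`), the pointwise recursion estimate for `F₁ - G₁` holds. -/
theorem chfis_pointwise_hidden_F1 (N : ℕ) (x y : ℕ → ℝ) (z t ts : ℕ → ℕ → ℝ)
    (a b c : ℕ → ℕ → ℝ)
    (hD : DataOK N N x y a b c)
    (hx0 : x 0 = 0) (hy0 : y 0 = 0) (hxN : x N = 1/2) (hyN : y N = 1/2)
    (F₁ F₂ G₁ G₂ : ℝ → ℝ → ℝ)
    (hF : IsCHFIS N N x y z t a b c F₁ F₂)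
    (hG : IsCHFIS N N x y z ts a b c G₁ G₂) :
    ∀ n m, 1 ≤ n → n ≤ N → 1 ≤ m → m ≤ N →
      ∀ X ∈ Icc (0:ℝ) (1/2), ∀ Y ∈ Icc (0:ℝ) (1/2),
        |F₁ (phiMap N x n X) (phiMap N y m Y) - G₁ (phiMap N x n X) (phiMap N y m Y)| ≤
          supParam N N a * |F₁ X Y - G₁ X Y|
          + supParam N N b * |F₂ X Y - G₂ X Y|
          + supParam N N b
            * (2 * |X - 1/2| + 2 * |Y - 1/2| + 4 * |X * Y - 1/4| + 1)
            * supValDiff N N t ts := by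
  intro n m hn1 hnN hm1 hmN X hX Y hY
  -- basic facts about supParam and supValDiff
  have hbddA : BddAbove {v : ℝ | ∃ n m, 1 ≤ n ∧ n ≤ N ∧ 1 ≤ m ∧ m ≤ N ∧ v = |a n m|} := by
    refine ⟨1, ?_⟩
    rintro v ⟨n, m, h1, h2, h3, h4, rfl⟩
    exact le_of_lt (hD.ha n m h1 h2 h3 h4)
  have hbddB : BddAbove {v : ℝ | ∃ n m, 1 ≤ n ∧ n ≤ N ∧ 1 ≤ m ∧ m ≤ N ∧ v = |b n m|} := by
    refine ⟨1, ?_⟩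
    rintro v ⟨n, m, h1, h2, h3, h4, rfl⟩
    have := hD.hbc n m h1 h2 h3 h4
    have := abs_nonneg (c n m)
    linarith
  have hA : |a n m| ≤ supParam N N a :=
    le_csSup hbddA ⟨n, m, hn1, hnN, hm1, hmN, rfl⟩
  have hB : |b n m| ≤ supParam N N b :=
    le_csSup hbddB ⟨n, m, hn1, hnN, hm1, hmN, rfl⟩
  have hB0 : 0 ≤ supParam N N b := le_trans (abs_nonneg _) hB
  have hbddD : BddAbove {v : ℝ | ∃ n m, n ≤ N ∧ m ≤ N ∧ v = |t n m - ts n m|} := by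
    apply Set.Finite.bddAbove
    have hsub : {v : ℝ | ∃ n m, n ≤ N ∧ m ≤ N ∧ v = |t n m - ts n m|}
        ⊆ (fun p : ℕ × ℕ => |t p.1 p.2 - ts p.1 p.2|) '' (Set.Iic N ×ˢ Set.Iic N) := by
      rintro v ⟨n, m, h1, h2, rfl⟩
      exact ⟨(n, m), ⟨h1, h2⟩, rfl⟩
    exact Set.Finite.subset (((Set.finite_Iic N).prod (Set.finite_Iic N)).image _) hsub
  set D := supValDiff N N t ts with hDdef
  have hmem : ∀ i j, i ≤ N → j ≤ N → |t i j - ts i j| ≤ D := fun i j hi hj =>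
    le_csSup hbddD ⟨i, j, hi, hj, rfl⟩
  have hD0 : 0 ≤ D := le_trans (abs_nonneg _) (hmem 0 0 (Nat.zero_le _) (Nat.zero_le _))
  -- the functional equations
  have hXx : X ∈ Icc (x 0) (x N) := by rw [hx0, hxN]; exact hX
  have hYy : Y ∈ Icc (y 0) (y N) := by rw [hy0, hyN]; exact hY
  have hFeq := (hF.2.2.2 n m hn1 hnN hm1 hmN X hXx Y hYy).1
  have hGeq := (hG.2.2.2 n m hn1 hnN hm1 hmN X hXx Y hYy).1
  have key : F₁ (phiMap N x n X) (phiMap N y m Y) - G₁ (phiMap N x n X) (phiMap N y m Y)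
      = a n m * (F₁ X Y - G₁ X Y) + b n m * (F₂ X Y - G₂ X Y)
        + (pMap N N x y z t a b n m X Y - pMap N N x y z ts a b n m X Y) := by
    rw [hFeq, hGeq]; ring
  -- the difference of the p-maps is a bilinear interpolation of t - ts
  have pdiff : pMap N N x y z t a b n m X Y - pMap N N x y z ts a b n m X Y
      = -(b n m) * ((1 - 2*X) * (1 - 2*Y) * (t 0 0 - ts 0 0)
          + 2*X * (1 - 2*Y) * (t N 0 - ts N 0)
          + (1 - 2*X) * (2*Y) * (t 0 N - ts 0 N)
          + 4*X*Y * (t N N - ts N N)) := by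
    simp only [pMap, eCoef, fCoef, gCoef, kCoef, eva, hx0, hy0, hxN, hyN]
    ring
  -- bound the bilinear combination
  obtain ⟨hX0, hX1⟩ := hX
  obtain ⟨hY0, hY1⟩ := hY
  have habs : ∀ i j, i ≤ N → j ≤ N → -D ≤ t i j - ts i j ∧ t i j - ts i j ≤ D := by
    intro i j hi hj
    exact abs_le.mp (hmem i j hi hj)
  obtain ⟨h00l, h00r⟩ := habs 0 0 (Nat.zero_le _) (Nat.zero_le _)
  obtain ⟨hN0l, hN0r⟩ := habs N 0 le_rfl (Nat.zero_le _)
  obtain ⟨h0Nl, h0Nr⟩ := habs 0 N (Nat.zero_le _) le_rfl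
  obtain ⟨hNNl, hNNr⟩ := habs N N le_rfl le_rfl
  have hcombo : |(1 - 2*X) * (1 - 2*Y) * (t 0 0 - ts 0 0)
      + 2*X * (1 - 2*Y) * (t N 0 - ts N 0)
      + (1 - 2*X) * (2*Y) * (t 0 N - ts 0 N)
      + 4*X*Y * (t N N - ts N N)| ≤ D := by
    have w1 : (0:ℝ) ≤ (1 - 2*X) * (1 - 2*Y) := by nlinarith
    have w2 : (0:ℝ) ≤ 2*X * (1 - 2*Y) := by nlinarith
    have w3 : (0:ℝ) ≤ (1 - 2*X) * (2*Y) := by nlinarith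
    have w4 : (0:ℝ) ≤ 4*X*Y := by nlinarith
    rw [abs_le]
    constructor <;> nlinarith [mul_le_mul_of_nonneg_left h00r w1,
      mul_le_mul_of_nonneg_left h00l w1, mul_le_mul_of_nonneg_left hN0r w2,
      mul_le_mul_of_nonneg_left hN0l w2, mul_le_mul_of_nonneg_left h0Nr w3,
      mul_le_mul_of_nonneg_left h0Nl w3, mul_le_mul_of_nonneg_left hNNr w4,
      mul_le_mul_of_nonneg_left hNNl w4]
  have hpd : |pMap N N x y z t a b n m X Y - pMap N N x y z ts a b n m X Y|
      ≤ supParam N N b * D := by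
    rw [pdiff, abs_mul, abs_neg]
    exact mul_le_mul hB hcombo (abs_nonneg _) hB0
  -- combine
  have hfac : (1:ℝ) ≤ 2 * |X - 1/2| + 2 * |Y - 1/2| + 4 * |X * Y - 1/4| + 1 := by
    have := abs_nonneg (X - 1/2)
    have := abs_nonneg (Y - 1/2)
    have := abs_nonneg (X * Y - 1/4)
    linarith
  calc |F₁ (phiMap N x n X) (phiMap N y m Y) - G₁ (phiMap N x n X) (phiMap N y m Y)|
      ≤ |a n m| * |F₁ X Y - G₁ X Y| + |b n m| * |F₂ X Y - G₂ X Y|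
        + |pMap N N x y z t a b n m X Y - pMap N N x y z ts a b n m X Y| := by
        rw [key]
        refine le_trans (abs_add_le _ _) (add_le_add ?_ le_rfl)
        refine le_trans (abs_add_le _ _) (add_le_add ?_ ?_) <;> rw [abs_mul]
    _ ≤ supParam N N a * |F₁ X Y - G₁ X Y| + supParam N N b * |F₂ X Y - G₂ X Y|
        + supParam N N b * (2 * |X - 1/2| + 2 * |Y - 1/2| + 4 * |X * Y - 1/4| + 1) * D := by
        have h1 := mul_le_mul_of_nonneg_right hA (abs_nonneg (F₁ X Y - G₁ X Y))
        have h2 := mul_le_mul_of_nonneg_right hB (abs_nonneg (F₂ X Y - G₂ X Y))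
        have h3 : supParam N N b * D
            ≤ supParam N N b * (2 * |X - 1/2| + 2 * |Y - 1/2| + 4 * |X * Y - 1/4| + 1) * D := by
          nlinarith [mul_nonneg (mul_nonneg hB0 hD0) (sub_nonneg.mpr hfac)]
        linarith [le_trans hpd h3]


end
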